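/- arXiv:math/0507508 — 3 statements merged into one kernel-verified Lean document; each statement's English description precedes it below -/
import Mathlib

section
/- Let W be a complex vector space and B'' : V × V̄ → U a sesquilinear-type map (complex bilinear on V × conjugate(V)). If for all linear maps L : V → V̄ and all v, v' ∈ V one has B''(L̄v, v̄') = B''(L̄v', v̄), and dim V ≥ 2, then B'' = 0. -/
/-!
Given `x` and `y`, pick a linear form `f` with `f y = 0` and `f v = 1` for some `v` (possible since
`dim V ≥ 2`), and take the rank-one antilinear map `L w = conj (f w) • x`. Then `L v = x` and
`L y = 0`, so the hypothesis gives `B x y = B (L v) y = B (L y) v = 0`.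
-/

open Module Submodule

theorem exists_dual_apply_eq_zero_and_apply_eq_one {K V : Type*} [Field K] [AddCommGroup V]
    [Module K V] (hV : 1 < Module.rank K V) (y : V) :
    ∃ (f : Dual K V) (v : V), f y = 0 ∧ f v = 1 := by
  have hy : Module.rank K (K ∙ y) < Module.rank K V :=
    (rank_span_le _).trans_lt (by simpa using hV)
  obtain ⟨v, hv⟩ := exists_smul_notMem_of_rank_lt hy
  obtain ⟨f, hfv, hf_span⟩ := exists_dual_map_eq_bot_of_notMem (by simpa using hv 1 one_ne_zero)
    inferInstance
  have hfy : f y = 0 := LinearMap.le_ker_iff_map.mpr hf_span (mem_span_singleton_self y)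
  exact ⟨(f v)⁻¹ • f, v, by simp [hfy], by simp [hfv]⟩

theorem stmt_0_general {V U : Type*} [AddCommGroup V] [Module ℂ V] [AddCommGroup U] [Module ℂ U]
    (B : V →ₗ[ℂ] V →ₛₗ[starRingEnd ℂ] U)
    (hdim : 2 ≤ Module.finrank ℂ V)
    (h : ∀ (L : V →ₛₗ[starRingEnd ℂ] V) (v v' : V), B (L v) v' = B (L v') v) :
    B = 0 := by
  ext x y
  obtain ⟨f, v, hfy, hfv⟩ :=
    exists_dual_apply_eq_zero_and_apply_eq_one (one_lt_rank_of_one_lt_finrank hdim) y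
  let L : V →ₛₗ[starRingEnd ℂ] V :=
    LinearMap.toSpanSingleton ℂ V x ∘ₛₗ (starRingEnd ℂ).toSemilinearMap ∘ₛₗ f
  simpa [L, hfv, hfy] using h L v y

/-- If `B'' : V × V̄ → U` (modeled as a sesquilinear map `B : V →ₗ V →ₛₗ U`,
`B x y = B''(x, ȳ)`) satisfies `B''(L̄v, v̄') = B''(L̄v', v̄)` for all `L ∈ Hom(V, V̄)`
(modeled as antilinear maps `L : V →ₛₗ V`) and all `v, v' ∈ V`, and `dim V ≥ 2`,
then `B'' = 0`. -/
theorem stmt_0 {V U : Type*} [AddCommGroup V] [Module ℂ V] [AddCommGroup U] [Module ℂ U]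
    [FiniteDimensional ℂ V]
    (B : V →ₗ[ℂ] V →ₛₗ[starRingEnd ℂ] U)
    (hdim : 2 ≤ Module.finrank ℂ V)
    (h : ∀ (L : V →ₛₗ[starRingEnd ℂ] V) (v v' : V), B (L v) v' = B (L v') v) :
    B = 0 :=
  stmt_0_general B hdim h
end

section
/- Let V be a finite-dimensional complex vector space, and let Ω₁ be the set of vectors v in V⊕V̄ arising as v ∈ W⊗ℂ (W a real vector space of dimension 2m, m≥2, with W⊗ℂ = V⊕V̄) such that v and v̄ are ℂ-linearly independent. Then the complement of Ω₁ in W⊗ℂ is a real algebraic subset of real codimension 2m−1; in particular, for m ≥ 2, Ω₁ is connected. -/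
/-!
Write `v = a + i b` with `a`, `b` real. Since `(v, v̄) = (a + i b, a - i b)` is an invertible
change of basis of `(a, b)`, and a complex relation `a = c b` between real vectors forces
`c = c̄`, the pair `(v, v̄)` is `ℂ`-independent iff `(a, b)` is `ℝ`-independent. This identifies
the complement of `Ω₁` with the complex multiples of real vectors, and exhibits `Ω₁` as the
continuous image of the independent pairs in the real form `W`. That space is path-connected
once `dim W ≥ 3`: each vector of a pair can be moved freely in the complement of the line
spanned by the other, which has codimension at least two.
-/

open Module Submodule ComplexConjugate

section IndependentPairs

variable {K E : Type*} [DivisionRing K] [AddCommGroup E] [Module K E]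

theorem rank_span_pair_le_two (x y : E) : Module.rank K (span K {x, y}) ≤ 2 := by
  classical
  have hcard : ({x, y} : Finset E).card ≤ 2 := Finset.card_le_two
  have hrank := rank_span_finset_le (R := K) ({x, y} : Finset E)
  rw [Finset.coe_insert, Finset.coe_singleton] at hrank
  exact hrank.trans (by exact_mod_cast hcard)

theorem span_pair_ne_top_of_two_lt_rank (h : 2 < Module.rank K E) (x y : E) :
    span K {x, y} ≠ ⊤ := by
  intro htop
  have hle := rank_span_pair_le_two (K := K) x y
  rw [htop, rank_top] at hle
  exact h.not_ge hle

theorem one_lt_rank_quotient_span_singleton (h : 2 < Module.rank K E) (x : E) :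
    1 < Module.rank K (E ⧸ K ∙ x) := by
  by_contra! hle
  have hx : Module.rank K (K ∙ x) ≤ 1 := (rank_span_le _).trans (by simp)
  have hE : Module.rank K E ≤ 2 := by
    rw [← rank_quotient_add_rank_of_divisionRing (K ∙ x), ← one_add_one_eq_two]
    exact add_le_add hle hx
  exact h.not_ge hE

theorem linearIndependent_pair_iff_notMem_span {x y : E} (hy : y ≠ 0) :
    LinearIndependent K ![x, y] ↔ x ∉ K ∙ y := by
  simp [linearIndependent_fin2, hy, mem_span_singleton]

theorem Submodule.linearIndependent_coe_pair_iff (p : Submodule K E) (a b : p) :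
    LinearIndependent K ![(a : E), b] ↔ LinearIndependent K ![a, b] := by
  rw [← p.subtype.linearIndependent_iff p.ker_subtype]
  congr!
  ext i
  fin_cases i <;> rfl

end IndependentPairs

section PathConnected

variable {E : Type*} [AddCommGroup E] [Module ℝ E] [TopologicalSpace E]
  [IsTopologicalAddGroup E] [ContinuousSMul ℝ E]

theorem joinedIn_linearIndependent_pair_left (h : 2 < Module.rank ℝ E) {a a' b : E}
    (ha : LinearIndependent ℝ ![a, b]) (ha' : LinearIndependent ℝ ![a', b]) :
    JoinedIn {p : E × E | LinearIndependent ℝ ![p.1, p.2]} (a, b) (a', b) := by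
  have hb : b ≠ 0 := by simpa using ha.ne_zero 1
  rw [linearIndependent_pair_iff_notMem_span hb] at ha ha'
  have hjoin := (isPathConnected_compl_of_one_lt_codim
    (one_lt_rank_quotient_span_singleton h b)).joinedIn a ha a' ha'
  refine (hjoin.map (f := fun x ↦ (x, b)) (by fun_prop)).mono ?_
  rintro _ ⟨x, hx, rfl⟩
  exact (linearIndependent_pair_iff_notMem_span hb).2 hx

theorem joinedIn_linearIndependent_pair_right (h : 2 < Module.rank ℝ E) {a b b' : E}
    (hb : LinearIndependent ℝ ![a, b]) (hb' : LinearIndependent ℝ ![a, b']) :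
    JoinedIn {p : E × E | LinearIndependent ℝ ![p.1, p.2]} (a, b) (a, b') := by
  rw [LinearIndependent.pair_symm_iff] at hb hb'
  refine ((joinedIn_linearIndependent_pair_left h hb hb').map continuous_swap).mono ?_
  rintro _ ⟨p, hp, rfl⟩
  exact LinearIndependent.pair_symm_iff.1 hp

theorem isPathConnected_setOf_linearIndependent_pair (h : 2 < Module.rank ℝ E) :
    IsPathConnected {p : E × E | LinearIndependent ℝ ![p.1, p.2]} := by
  have exists_notMem_span_pair (x y : E) : ∃ z, z ∉ span ℝ {x, y} := by
    simpa using SetLike.exists_of_lt (span_pair_ne_top_of_two_lt_rank h x y).lt_top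
  have indep_of_notMem {z x y : E} (hz : z ∉ span ℝ {x, y}) (hx : x ≠ 0) :
      LinearIndependent ℝ ![z, x] :=
    (linearIndependent_pair_iff_notMem_span hx).2
      fun hzx ↦ hz (span_mono (by simp) hzx)
  rw [isPathConnected_iff]
  constructor
  · obtain ⟨b, hb⟩ := exists_notMem_span_pair 0 0
    obtain ⟨a, ha⟩ := exists_notMem_span_pair b b
    exact ⟨(a, b), indep_of_notMem ha (by rintro rfl; simp at hb)⟩
  · rintro ⟨a₀, b₀⟩ h₀ ⟨a₁, b₁⟩ h₁
    obtain ⟨a, ha⟩ := exists_notMem_span_pair b₀ b₁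
    have hb₀ : LinearIndependent ℝ ![a, b₀] := indep_of_notMem ha (by simpa using h₀.ne_zero 1)
    have hb₁ : LinearIndependent ℝ ![a, b₁] :=
      indep_of_notMem (Set.pair_comm b₀ b₁ ▸ ha) (by simpa using h₁.ne_zero 1)
    exact ((joinedIn_linearIndependent_pair_left h h₀ hb₀).trans
      (joinedIn_linearIndependent_pair_right h hb₀ hb₁)).trans
      (joinedIn_linearIndependent_pair_left h hb₁ h₁)

end PathConnected

section Conjugation

variable {E : Type*} [AddCommGroup E] [Module ℂ E] (σ : E →ₛₗ[starRingEnd ℂ] E)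

def realSubspace : Submodule ℝ E where
  carrier := {w | σ w = w}
  add_mem' {x y} hx hy := by simp_all
  zero_mem' := map_zero σ
  smul_mem' r x (hx : σ x = x) := by
    rw [Set.mem_ofPred_eq, ← Complex.coe_smul, map_smulₛₗ, hx, Complex.conj_ofReal]

variable {σ}

theorem mem_realSubspace {w : E} : w ∈ realSubspace σ ↔ σ w = w := Iff.rfl

theorem map_smul_of_mem_realSubspace {w : E} (hw : w ∈ realSubspace σ) (c : ℂ) :
    σ (c • w) = conj c • w := by
  rw [map_smulₛₗ, hw]

theorem linearIndependent_complex_pair_iff_real {a b : E} (ha : a ∈ realSubspace σ)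
    (hb : b ∈ realSubspace σ) :
    LinearIndependent ℂ ![a, b] ↔ LinearIndependent ℝ ![a, b] := by
  simp only [linearIndependent_fin2, Matrix.cons_val_one, Matrix.cons_val_zero]
  refine and_congr_right fun hb₀ ↦ ⟨fun h r ↦ by simpa using h r, fun h c hc ↦ ?_⟩
  have hconj : conj c = c := smul_left_injective ℂ hb₀ <| show conj c • b = c • b by
    rw [← map_smul_of_mem_realSubspace hb, hc, ha]
  rw [Complex.conj_eq_iff_re] at hconj
  exact h c.re (by rw [← Complex.coe_smul, hconj, hc])

theorem linearIndependent_conj_pair_iff (a b : realSubspace σ) :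
    LinearIndependent ℂ ![(a : E) + Complex.I • (b : E), σ (a + Complex.I • b)] ↔
      LinearIndependent ℝ ![a, b] := by
  have hconj : σ (a + Complex.I • b) = (1 : ℂ) • (a : E) + (-Complex.I) • (b : E) := by
    rw [map_add, map_smul_of_mem_realSubspace b.2, a.2, Complex.conj_I, one_smul]
  have hv : (a : E) + Complex.I • (b : E) = (1 : ℂ) • (a : E) + Complex.I • (b : E) := by
    rw [one_smul]
  have hdet : (1 : ℂ) * -Complex.I ≠ Complex.I * 1 := by norm_num [Complex.ext_iff]
  rw [hconj, hv, LinearIndependent.pair_add_smul_add_smul_iff, and_iff_left hdet,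
    linearIndependent_complex_pair_iff_real a.2 b.2, Submodule.linearIndependent_coe_pair_iff]

variable (σ) in
def realImag : (realSubspace σ × realSubspace σ) →ₗ[ℝ] E :=
  (realSubspace σ).subtype.coprod (Complex.I • (realSubspace σ).subtype)

@[simp]
theorem realImag_apply (p : realSubspace σ × realSubspace σ) :
    realImag σ p = (p.1 : E) + Complex.I • (p.2 : E) := rfl

theorem realImag_injective : Function.Injective (realImag σ) := by
  rw [← LinearMap.ker_eq_bot, LinearMap.ker_eq_bot']
  rintro ⟨a, b⟩ hab
  replace hab : (a : E) + Complex.I • (b : E) = 0 := hab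
  have hconj : (a : E) - Complex.I • (b : E) = 0 := by
    rw [← map_zero σ, ← hab, map_add, map_smul_of_mem_realSubspace b.2, a.2, Complex.conj_I,
      neg_smul, sub_eq_add_neg]
  have ha : (2 : ℂ) • (a : E) = 0 := by linear_combination (norm := module) hab + hconj
  have hb : (2 * Complex.I) • (b : E) = 0 := by linear_combination (norm := module) hab - hconj
  simp_all [Complex.I_ne_zero]

theorem realImag_surjective (hσ : ∀ w, σ (σ w) = w) : Function.Surjective (realImag σ) := by
  intro v
  have hre : (2⁻¹ : ℂ) • (v + σ v) ∈ realSubspace σ := by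
    rw [mem_realSubspace, map_smulₛₗ, map_add, hσ, add_comm, map_inv₀, map_ofNat]
  have him : (Complex.I / 2) • (σ v - v) ∈ realSubspace σ := by
    rw [mem_realSubspace, map_smulₛₗ, map_sub, hσ, map_div₀, Complex.conj_I, map_ofNat,
      ← neg_sub, smul_neg, ← neg_smul, neg_div, neg_neg]
  refine ⟨(⟨_, hre⟩, ⟨_, him⟩), ?_⟩
  rw [realImag_apply]
  linear_combination (norm := module) ((2⁻¹ : ℂ) * Complex.I_sq) • (σ v - v)

theorem finrank_realSubspace [FiniteDimensional ℂ E] (hσ : ∀ w, σ (σ w) = w) :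
    finrank ℝ (realSubspace σ) = finrank ℂ E := by
  have h := (LinearEquiv.ofBijective (realImag σ)
    ⟨realImag_injective, realImag_surjective hσ⟩).finrank_eq
  rw [finrank_prod, finrank_real_of_complex] at h
  omega

theorem not_linearIndependent_conj_pair_iff (hσ : ∀ w, σ (σ w) = w) (v : E) :
    ¬ LinearIndependent ℂ ![v, σ v] ↔ ∃ (c : ℂ) (w : E), σ w = w ∧ v = c • w := by
  constructor
  · obtain ⟨⟨a, b⟩, rfl⟩ := realImag_surjective hσ v
    rw [realImag_apply, linearIndependent_conj_pair_iff, linearIndependent_fin2]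
    simp only [Matrix.cons_val_one, Matrix.cons_val_zero, not_and_or, not_not, not_forall]
    rintro (rfl | ⟨r, rfl⟩)
    · exact ⟨1, a, a.2, by simp⟩
    · exact ⟨r + Complex.I, b, b.2, by simp [add_smul, Complex.coe_smul]⟩
  · rintro ⟨c, w, hw, rfl⟩ hind
    have hdep : conj c • (c • w) + (-c) • σ (c • w) = 0 := by
      rw [map_smul_of_mem_realSubspace hw]
      module
    obtain ⟨hc, -⟩ := LinearIndependent.pair_iff.1 hind _ _ hdep
    rw [map_eq_zero] at hc
    simpa [hc] using hind.ne_zero 0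

theorem setOf_linearIndependent_conj_pair_eq_image (hσ : ∀ w, σ (σ w) = w) :
    {v : E | LinearIndependent ℂ ![v, σ v]} =
      realImag σ '' {p | LinearIndependent ℝ ![p.1, p.2]} := by
  ext v
  obtain ⟨p, rfl⟩ := realImag_surjective hσ v
  rw [Set.mem_ofPred_eq, realImag_injective.mem_set_image, realImag_apply,
    linearIndependent_conj_pair_iff]
  rfl

end Conjugation

/-- Let `W⊗ℂ = V ⊕ V̄` be the complexification of a real vector space `W` of
dimension `2m`, `m ≥ 2`, with conjugation `σ`, and let
`Ω₁ = {v | v, v̄ are ℂ-linearly independent}`.  The complement of `Ω₁` is the real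
algebraic subset `{λw : λ ∈ ℂ, w real}` of real codimension `2m−1`; in particular, for
`m ≥ 2`, `Ω₁` is connected. -/
theorem stmt_8 {Wc : Type*} [NormedAddCommGroup Wc] [NormedSpace ℂ Wc]
    [FiniteDimensional ℂ Wc]
    (σ : Wc →ₛₗ[starRingEnd ℂ] Wc) (hσ : ∀ w, σ (σ w) = w)
    (m : ℕ) (hm : 2 ≤ m) (hdim : Module.finrank ℂ Wc = 2 * m) :
    ({v : Wc | ¬ LinearIndependent ℂ ![v, σ v]}
        = {v : Wc | ∃ (c : ℂ) (w : Wc), σ w = w ∧ v = c • w})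
    ∧ IsConnected {v : Wc | LinearIndependent ℂ ![v, σ v]} := by
  refine ⟨Set.ext (not_linearIndependent_conj_pair_iff hσ), ?_⟩
  have hrank : 2 < Module.rank ℝ (realSubspace σ) := by
    rw [← finrank_eq_rank, finrank_realSubspace hσ, hdim]
    exact_mod_cast (by omega : 2 < 2 * m)
  rw [setOf_linearIndependent_conj_pair_eq_image hσ]
  exact ((isPathConnected_setOf_linearIndependent_pair hrank).image
    (realImag σ).continuous_of_finiteDimensional).isConnected
end

section
/- Define G : Hom(V,V̄) ⊕ Hom(U,Ū) → Hom(Λ²V, U) by G(L,M)(v,v') = conjugate(M B'(v,v')) − B''(L̄v, v̄') + B''(L̄v', v̄). If dim V = 2, dim U = 1, and (B',B'') ≠ (0,0), then G is surjective. -/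
/-!
An alternating sesquilinear form on a 2-dimensional space is determined by its value on one
basis pair `(e₀, e₁)`, and `G(L, M)` is alternating, so it suffices to hit `C(e₀, e₁)`.
If `B' ≠ 0` then `B'(e₀, e₁) ≠ 0`, and an antilinear `M` sending it to `C(e₀, e₁)` works with
`L = 0`. If `B' = 0` then `B ≠ 0`, say `B(a, eᵢ) ≠ 0`; as `dim U = 1`, `C(e₀, e₁)` is a multiple
of `B(a, eᵢ)`, which an antilinear `L` supported on the other basis vector produces.
-/

namespace LinearMap.IsAlt

variable {R M₁ M : Type*} [CommSemiring R] [AddCommMonoid M₁] [Module R M₁]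
  [AddCommGroup M] [Module R M] {I₁ I₂ : R →+* R} {B B' : M₁ →ₛₗ[I₁] M₁ →ₛₗ[I₂] M}

theorem ext_basis_fin_two (b : Module.Basis (Fin 2) R M₁) (hB : B.IsAlt) (hB' : B'.IsAlt)
    (h : B (b 0) (b 1) = B' (b 0) (b 1)) : B = B' := by
  refine LinearMap.ext_basis b b fun i j => ?_
  fin_cases i <;> fin_cases j
  · simp only [hB.self_eq_zero, hB'.self_eq_zero]
  · exact h
  · rw [← hB.neg, ← hB'.neg]
    exact congrArg Neg.neg h
  · simp only [hB.self_eq_zero, hB'.self_eq_zero]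

theorem apply_basis_fin_two_ne_zero (b : Module.Basis (Fin 2) R M₁) (hB : B.IsAlt) (hB0 : B ≠ 0) :
    B (b 0) (b 1) ≠ 0 :=
  fun h => hB0 (hB.ext_basis_fin_two b (fun _ => rfl) h)

end LinearMap.IsAlt

section Antilinear

variable {W W' : Type*} [AddCommGroup W] [Module ℂ W] [AddCommGroup W'] [Module ℂ W']

noncomputable def conjSmulRight (φ : Module.Dual ℂ W) (w : W') : W →ₛₗ[starRingEnd ℂ] W' :=
  LinearMap.toSpanSingleton ℂ W' w ∘ₛₗ (starLinearEquiv ℂ).toLinearMap ∘ₛₗ φ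

@[simp]
theorem conjSmulRight_apply (φ : Module.Dual ℂ W) (w : W') (v : W) :
    conjSmulRight φ w v = starRingEnd ℂ (φ v) • w :=
  rfl

theorem exists_antilinear_apply_eq {u : W} (hu : u ≠ 0) (w : W') :
    ∃ M : W →ₛₗ[starRingEnd ℂ] W', M u = w := by
  obtain ⟨φ, -, hφ⟩ := LinearMap.exists_extend_of_notMem (0 : (⊥ : Submodule ℂ W) →ₗ[ℂ] ℂ)
    (by simpa using hu) 1
  exact ⟨conjSmulRight φ w, by simp [hφ]⟩

end Antilinear

section FormG

variable {V U : Type*} [AddCommGroup V] [Module ℂ V] [AddCommGroup U] [Module ℂ U]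

noncomputable def formG (B' : V →ₗ[ℂ] V →ₗ[ℂ] U) (B : V →ₗ[ℂ] V →ₛₗ[starRingEnd ℂ] U)
    (L : V →ₛₗ[starRingEnd ℂ] V) (M : U →ₛₗ[starRingEnd ℂ] U) :
    V →ₛₗ[starRingEnd ℂ] V →ₛₗ[starRingEnd ℂ] U :=
  B'.compr₂ₛₗ M - B ∘ₛₗ L + (B ∘ₛₗ L).flip

variable {B' : V →ₗ[ℂ] V →ₗ[ℂ] U} {B : V →ₗ[ℂ] V →ₛₗ[starRingEnd ℂ] U}

@[simp]
theorem formG_apply (L : V →ₛₗ[starRingEnd ℂ] V) (M : U →ₛₗ[starRingEnd ℂ] U) (v v' : V) :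
    formG B' B L M v v' = M (B' v v') - B (L v) v' + B (L v') v :=
  rfl

theorem isAlt_formG (hB' : B'.IsAlt) (L : V →ₛₗ[starRingEnd ℂ] V) (M : U →ₛₗ[starRingEnd ℂ] U) :
    (formG B' B L M).IsAlt := fun v => by simp [hB'.self_eq_zero]

theorem exists_formG_apply_eq_of_ne_zero (e : Module.Basis (Fin 2) ℂ V) (hB' : B'.IsAlt)
    (hB'0 : B' ≠ 0) (u : U) : ∃ M, formG B' B 0 M (e 0) (e 1) = u := by
  obtain ⟨M, hM⟩ := exists_antilinear_apply_eq (hB'.apply_basis_fin_two_ne_zero e hB'0) u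
  exact ⟨M, by simp [hM]⟩

theorem exists_formG_apply_eq_of_finrank_eq_one (e : Module.Basis (Fin 2) ℂ V)
    (hU : Module.finrank ℂ U = 1) (hB0 : B ≠ 0) (u : U) :
    ∃ L, formG 0 B L 0 (e 0) (e 1) = u := by
  obtain ⟨a, i, ha⟩ : ∃ a i, B a (e i) ≠ 0 := by
    by_contra! h
    exact hB0 (LinearMap.ext fun a => e.ext fun i => h a i)
  obtain ⟨μ, rfl⟩ := (finrank_eq_one_iff_of_nonzero' _ ha).mp hU u
  fin_cases i
  · exact ⟨conjSmulRight (e.coord 1) (μ • a), by simp⟩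
  · exact ⟨conjSmulRight (e.coord 0) (-(μ • a)), by simp⟩

end FormG

theorem stmt_12_general {V U : Type*} [AddCommGroup V] [Module ℂ V] [AddCommGroup U] [Module ℂ U]
    [FiniteDimensional ℂ V]
    (hdimV : Module.finrank ℂ V = 2) (hdimU : Module.finrank ℂ U = 1)
    (B' : V →ₗ[ℂ] V →ₗ[ℂ] U) (hB'alt : ∀ v, B' v v = 0)
    (B : V →ₗ[ℂ] V →ₛₗ[starRingEnd ℂ] U)
    (hne : ¬(B' = 0 ∧ B = 0)) :
    ∀ C : V →ₛₗ[starRingEnd ℂ] (V →ₛₗ[starRingEnd ℂ] U), (∀ v, C v v = 0) →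
      ∃ (L : V →ₛₗ[starRingEnd ℂ] V) (M : U →ₛₗ[starRingEnd ℂ] U),
        ∀ v v' : V, C v v' = M (B' v v') - B (L v) v' + B (L v') v := by
  intro C hC
  let e := Module.finBasisOfFinrankEq ℂ V hdimV
  obtain ⟨L, M, hLM⟩ : ∃ L M, formG B' B L M (e 0) (e 1) = C (e 0) (e 1) := by
    by_cases hB'0 : B' = 0
    · subst hB'0
      obtain ⟨L, hL⟩ := exists_formG_apply_eq_of_finrank_eq_one e hdimU (hne ⟨rfl, ·⟩) (C (e 0) (e 1))
      exact ⟨L, 0, hL⟩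
    · obtain ⟨M, hM⟩ := exists_formG_apply_eq_of_ne_zero e hB'alt hB'0 (C (e 0) (e 1))
      exact ⟨0, M, hM⟩
  have hCG := LinearMap.IsAlt.ext_basis_fin_two e hC (isAlt_formG hB'alt L M) hLM.symm
  exact ⟨L, M, fun v v' => by rw [hCG, formG_apply]⟩

/-- With `dim V = 2`, `dim U = 1`, `B' ∈ Λ²(V)^∨⊗U` and
`B'' : V × V̄ → U` (modeled as a sesquilinear map `B : V →ₗ V →ₛₗ U`) not both zero, the
map `G : Hom(V,V̄) ⊕ Hom(U,Ū) → Hom(Λ²V, U)`,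
`G(L,M)(v,v') = conj(M B'(v,v')) − B''(L̄v, v̄') + B''(L̄v', v̄)` is surjective.
Here `Hom(V,V̄)` is modeled as antilinear maps `L : V →ₛₗ V` (so `L v = L̄v`),
`Hom(U,Ū)` as antilinear maps `M : U →ₛₗ U` (so `M u = conj(M u)` in `U`), and the target
`Hom(Λ²V,U)` as alternating conjugate-bilinear forms `C`. -/
theorem stmt_12 {V U : Type*} [AddCommGroup V] [Module ℂ V] [AddCommGroup U] [Module ℂ U]
    [FiniteDimensional ℂ V] [FiniteDimensional ℂ U]
    (hdimV : Module.finrank ℂ V = 2) (hdimU : Module.finrank ℂ U = 1)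
    (B' : V →ₗ[ℂ] V →ₗ[ℂ] U) (hB'alt : ∀ v, B' v v = 0)
    (B : V →ₗ[ℂ] V →ₛₗ[starRingEnd ℂ] U)
    (hne : ¬(B' = 0 ∧ B = 0)) :
    ∀ C : V →ₛₗ[starRingEnd ℂ] (V →ₛₗ[starRingEnd ℂ] U), (∀ v, C v v = 0) →
      ∃ (L : V →ₛₗ[starRingEnd ℂ] V) (M : U →ₛₗ[starRingEnd ℂ] U),
        ∀ v v' : V, C v v' = M (B' v v') - B (L v) v' + B (L v') v :=
  stmt_12_general hdimV hdimU B' hB'alt B hne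
end
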